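/- Suppose for each state index s ∈ {1,…,n} and each agent i there exist matrices T, L (with T = I − ΓC^ℓ for some Γ) such that the s-th row of TA − LC^ℓ has ℓ₁ norm < 1, where ℓ = ℓ(i,s) is some agent in the d-hop neighborhood of i. Then the block-selected matrix H*Â, whose row (corresponding to agent i, state s) is row s of Â^{ℓ(i,s)}, satisfies ‖H*Â‖_∞ < 1 and hence ρ(H*Â) < 1. -/

import Mathlib

open Matrix

noncomputable def specRad {ι : Type*} [Fintype ι] [DecidableEq ι]
    (M : Matrix ι ι ℝ) : ENNReal :=
  spectralRadius ℂ (M.map (Complex.ofReal))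

noncomputable def matPos {n : ℕ} (M : Matrix (Fin n) (Fin n) ℝ) : Matrix (Fin n) (Fin n) ℝ :=
  fun i j => max (M i j) 0

noncomputable def matNeg {n : ℕ} (M : Matrix (Fin n) (Fin n) ℝ) : Matrix (Fin n) (Fin n) ℝ :=
  matPos M - M

noncomputable def hatMat {n : ℕ} (M : Matrix (Fin n) (Fin n) ℝ) :
    Matrix (Fin n ⊕ Fin n) (Fin n ⊕ Fin n) ℝ :=
  Matrix.fromBlocks (matPos M) (matNeg M) (matNeg M) (matPos M)

/-! Row `(s, ±)` of agent `i` in `H*Â` is row `s` or `n + s` of `Â^{ℓ(i,s)}`. Since the entries of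
such a row are the numbers `a⁺, a⁻` for `a` in row `s` of `Ã^{ℓ(i,s)}`, and `a⁺ + a⁻ = |a|`, its
ℓ₁ norm equals that of row `s` of `Ã^{ℓ(i,s)}`, which is `< 1`. Hence the induced ∞-norm of `H*Â`
is `< 1`, and it bounds the spectral radius. -/

lemma matPos_apply {n : ℕ} (M : Matrix (Fin n) (Fin n) ℝ) (i j : Fin n) :
    matPos M i j = (M i j)⁺ := rfl

lemma matNeg_apply {n : ℕ} (M : Matrix (Fin n) (Fin n) ℝ) (i j : Fin n) :
    matNeg M i j = (M i j)⁻ := by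
  rw [matNeg, Matrix.sub_apply, matPos_apply]
  nth_rw 2 [← posPart_sub_negPart (M i j)]
  exact sub_sub_cancel _ _

lemma abs_matPos_apply_add_abs_matNeg_apply {n : ℕ} (M : Matrix (Fin n) (Fin n) ℝ) (i j : Fin n) :
    |matPos M i j| + |matNeg M i j| = |M i j| := by
  rw [matPos_apply, matNeg_apply, abs_of_nonneg (posPart_nonneg _),
    abs_of_nonneg (negPart_nonneg _), posPart_add_negPart]

lemma sum_abs_hatMat_row {n : ℕ} (M : Matrix (Fin n) (Fin n) ℝ) (u : Fin n ⊕ Fin n) :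
    ∑ q, |hatMat M u q| = ∑ j, |M (Sum.elim id id u) j| := by
  rw [Fintype.sum_sum_type, ← Finset.sum_add_distrib]
  refine Finset.sum_congr rfl fun j _ => ?_
  rcases u with s | s
  · exact abs_matPos_apply_add_abs_matNeg_apply M s j
  · exact (add_comm _ _).trans (abs_matPos_apply_add_abs_matNeg_apply M s j)

lemma sum_abs_blockDiagonal_row {o m n R : Type*} [Fintype o] [Fintype n] [DecidableEq o]
    [AddCommGroup R] [Lattice R] [AddLeftMono R] (B : o → Matrix m n R) (i : m) (k : o) :
    ∑ q, |blockDiagonal B (i, k) q| = ∑ j, |B k i j| := by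
  rw [Fintype.sum_prod_type]
  refine Finset.sum_congr rfl fun j _ => ?_
  rw [Finset.sum_eq_single k (fun k' _ hk' => by simp [blockDiagonal_apply_ne B i j hk'.symm])
    (by simp), blockDiagonal_apply_eq]

lemma mul_apply_of_eq_ite {m n R : Type*} [Fintype m] [DecidableEq m] [NonAssocSemiring R]
    {H : Matrix m m R} (σ : m → m) (hH : ∀ p q, H p q = if q = σ p then 1 else 0)
    (M : Matrix m n R) (p : m) (q : n) : (H * M) p q = M (σ p) q := by
  simp [mul_apply, hH]

section LinftyOpNorm

attribute [local instance] Matrix.linftyOpNormedRing Matrix.linftyOpNormedAlgebra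

lemma nnnorm_map_ofReal {m : Type*} [Fintype m] [DecidableEq m] (M : Matrix m m ℝ) :
    ‖M.map Complex.ofReal‖₊ = ‖M‖₊ := by
  simp [linfty_opNNNorm_def]

lemma specRad_le_nnnorm {m : Type*} [Fintype m] [DecidableEq m] (M : Matrix m m ℝ) :
    specRad M ≤ ‖M‖₊ := by
  cases isEmpty_or_nonempty m
  · simp [specRad, spectrum.SpectralRadius.of_subsingleton]
  · rw [specRad, ← nnnorm_map_ofReal]
    exact spectrum.spectralRadius_le_nnnorm _

lemma specRad_lt_one_of_sum_abs_lt_one {m : Type*} [Fintype m] [DecidableEq m]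
    (M : Matrix m m ℝ) (hM : ∀ p, ∑ q, |M p q| < 1) : specRad M < 1 := by
  refine (specRad_le_nnnorm M).trans_lt ?_
  have hnorm : ‖M‖₊ < 1 := by
    rw [linfty_opNNNorm_def, Finset.sup_lt_iff zero_lt_one]
    intro p _
    rw [← NNReal.coe_lt_coe]
    simpa using hM p
  exact_mod_cast hnorm

end LinftyOpNorm

theorem stmt15_general {n N : ℕ}
    (Atil : Fin N → Matrix (Fin n) (Fin n) ℝ)
    (ℓ : Fin N → Fin n → Fin N)
    (hrow : ∀ i s, (∑ j, |Atil (ℓ i s) s j|) < 1)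
    (Ahat : Matrix ((Fin n ⊕ Fin n) × Fin N) ((Fin n ⊕ Fin n) × Fin N) ℝ)
    (hAhat : Ahat = Matrix.blockDiagonal (fun j => hatMat (Atil j)))
    (Hs : Matrix ((Fin n ⊕ Fin n) × Fin N) ((Fin n ⊕ Fin n) × Fin N) ℝ)
    (hHs : ∀ p q, Hs p q =
      if q.2 = ℓ p.2 (Sum.elim id id p.1) ∧ q.1 = p.1 then 1 else 0) :
    (∀ p, (∑ q, |(Hs * Ahat) p q|) < 1) ∧ specRad (Hs * Ahat) < 1 := by
  have hsel : ∀ p q, Hs p q = if q = (p.1, ℓ p.2 (Sum.elim id id p.1)) then 1 else 0 := by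
    intro p q
    simp only [hHs, Prod.ext_iff, and_comm]
  have hrows : ∀ p, ∑ q, |(Hs * Ahat) p q| < 1 := by
    rintro ⟨u, i⟩
    simp only [mul_apply_of_eq_ite _ hsel, hAhat, sum_abs_blockDiagonal_row, sum_abs_hatMat_row]
    exact hrow i _
  exact ⟨hrows, specRad_lt_one_of_sum_abs_lt_one _ hrows⟩

theorem stmt15 {n N : ℕ} {m : Fin N → ℕ}
    (A : Matrix (Fin n) (Fin n) ℝ)
    (T : Fin N → Matrix (Fin n) (Fin n) ℝ)
    (Γ L : (j : Fin N) → Matrix (Fin n) (Fin (m j)) ℝ)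
    (C : (j : Fin N) → Matrix (Fin (m j)) (Fin n) ℝ)
    (hT : ∀ j, T j = 1 - Γ j * C j)
    (Atil : Fin N → Matrix (Fin n) (Fin n) ℝ)
    (hAtil : ∀ j, Atil j = T j * A - L j * C j)
    (Nd : Fin N → Finset (Fin N))
    (ℓ : Fin N → Fin n → Fin N)
    (hℓ : ∀ i s, ℓ i s ∈ Nd i)
    (hrow : ∀ i s, (∑ j, |Atil (ℓ i s) s j|) < 1)
    (Ahat : Matrix ((Fin n ⊕ Fin n) × Fin N) ((Fin n ⊕ Fin n) × Fin N) ℝ)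
    (hAhat : Ahat = Matrix.blockDiagonal (fun j => hatMat (Atil j)))
    (Hs : Matrix ((Fin n ⊕ Fin n) × Fin N) ((Fin n ⊕ Fin n) × Fin N) ℝ)
    (hHs : ∀ p q, Hs p q =
      if q.2 = ℓ p.2 (Sum.elim id id p.1) ∧ q.1 = p.1 then 1 else 0) :
    (∀ p, (∑ q, |(Hs * Ahat) p q|) < 1) ∧ specRad (Hs * Ahat) < 1 :=
  stmt15_general Atil ℓ hrow Ahat hAhat Hs hHs
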